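/- Let p ≥ 3 be prime, a, b ∈ E_p with b ≠ 1 and |a − 1|_p < |b − 1|_p, and suppose g(u) = a(b²u² + 1)/(b² + u²) has three fixed points x₀ ∈ E_p and x₁, x₂ ∉ E_p. Then |x₁ − x₂|_p = 1; in particular the balls B_r(x₁) and B_r(x₂) with r = |b − 1|_p are disjoint. -/

import Mathlib

/-!
Clearing denominators, the fixed points of `g` are the roots of the monic cubic
`x³ - ab²x² + b²x - a`, so by Vieta `x₁ + x₂ = ab² - x₀` and `x₀x₁x₂ = a`. Hence
`x₀ (x₁ - x₂)² = x₀ (ab² - x₀)² - 4a`. Since `a`, `b`, `x₀` all lie in `1 + p ℤ_p`, the first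
term on the right has norm `< 1` while `‖4a‖ = 1` for odd `p`, so `‖x₁ - x₂‖ = 1`. In an
ultrametric space, balls of radius `< 1` around points at distance `1` are disjoint.
-/

open Metric

section Cubic

variable {K : Type*} [Field K]

theorem cubic_eq_zero_of_fixedPoint {a b x : K} (hb : b ≠ 0)
    (h : a * (b ^ 2 * x ^ 2 + 1) / (b ^ 2 + x ^ 2) = x) :
    x ^ 3 - a * b ^ 2 * x ^ 2 + b ^ 2 * x - a = 0 := by
  have hd : b ^ 2 + x ^ 2 ≠ 0 := by
    intro hd
    -- division by zero gives `x = 0`, and then `b ^ 2 = 0`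
    have hx : x = 0 := by rw [← h, hd, div_zero]
    exact hb (pow_eq_zero_iff two_ne_zero |>.mp (by simpa [hx] using hd))
  rw [div_eq_iff hd] at h
  linear_combination -h

theorem vieta_of_three_roots {s c d x₀ x₁ x₂ : K}
    (h₀ : x₀ ^ 3 - s * x₀ ^ 2 + c * x₀ - d = 0) (h₁ : x₁ ^ 3 - s * x₁ ^ 2 + c * x₁ - d = 0)
    (h₂ : x₂ ^ 3 - s * x₂ ^ 2 + c * x₂ - d = 0)
    (h₀₁ : x₀ ≠ x₁) (h₀₂ : x₀ ≠ x₂) (h₁₂ : x₁ ≠ x₂) :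
    x₀ + x₁ + x₂ = s ∧ x₀ * x₁ * x₂ = d := by
  -- divided differences of the cubic
  have q₀₁ : x₀ ^ 2 + x₀ * x₁ + x₁ ^ 2 - s * (x₀ + x₁) + c = 0 := by
    refine (mul_eq_zero.mp ?_).resolve_left (sub_ne_zero.mpr h₀₁)
    linear_combination h₀ - h₁
  have q₀₂ : x₀ ^ 2 + x₀ * x₂ + x₂ ^ 2 - s * (x₀ + x₂) + c = 0 := by
    refine (mul_eq_zero.mp ?_).resolve_left (sub_ne_zero.mpr h₀₂)
    linear_combination h₀ - h₂
  have hsum : x₀ + x₁ + x₂ = s := by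
    have : (x₁ - x₂) * (x₀ + x₁ + x₂ - s) = 0 := by linear_combination q₀₁ - q₀₂
    linear_combination (mul_eq_zero.mp this).resolve_left (sub_ne_zero.mpr h₁₂)
  refine ⟨hsum, ?_⟩
  linear_combination h₀ - x₀ * q₀₁ + x₀ * x₁ * hsum

theorem mul_sub_sq_of_three_roots {s c d x₀ x₁ x₂ : K}
    (h₀ : x₀ ^ 3 - s * x₀ ^ 2 + c * x₀ - d = 0) (h₁ : x₁ ^ 3 - s * x₁ ^ 2 + c * x₁ - d = 0)
    (h₂ : x₂ ^ 3 - s * x₂ ^ 2 + c * x₂ - d = 0)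
    (h₀₁ : x₀ ≠ x₁) (h₀₂ : x₀ ≠ x₂) (h₁₂ : x₁ ≠ x₂) :
    x₀ * (x₁ - x₂) ^ 2 = x₀ * (s - x₀) ^ 2 - 4 * d := by
  obtain ⟨hsum, hprod⟩ := vieta_of_three_roots h₀ h₁ h₂ h₀₁ h₀₂ h₁₂
  linear_combination x₀ * (x₁ + x₂ + s - x₀) * hsum - 4 * hprod

end Cubic

namespace IsUltrametricDist

theorem disjoint_ball_ball_of_le_dist {X : Type*} [PseudoMetricSpace X] [IsUltrametricDist X]
    {x y : X} {r : ℝ} (h : r ≤ dist x y) : Disjoint (ball x r) (ball y r) := by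
  refine Set.disjoint_left.mpr fun z hzx hzy => ?_
  have := (dist_triangle_max x z y).trans_lt (max_lt (mem_ball'.mp hzx) (mem_ball.mp hzy))
  exact this.not_ge h

theorem norm_sub_eq_of_norm_lt {S : Type*} [SeminormedAddGroup S] [IsUltrametricDist S]
    {u v : S} (h : ‖u‖ < ‖v‖) : ‖u - v‖ = ‖v‖ := by
  rw [sub_eq_add_neg, norm_add_eq_max_of_norm_ne_norm (by rw [norm_neg]; exact h.ne), norm_neg,
    max_eq_right h.le]

variable {K : Type*} [NormedField K] [IsUltrametricDist K] {x y : K}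

theorem norm_eq_one_of_norm_sub_one_lt_one (hx : ‖x - 1‖ < 1) : ‖x‖ = 1 := by
  simpa [norm_neg] using norm_sub_eq_of_norm_lt (u := x - 1) (v := -1) (by simpa using hx)

theorem norm_sub_lt_one_of_norm_sub_one_lt_one (hx : ‖x - 1‖ < 1) (hy : ‖y - 1‖ < 1) :
    ‖x - y‖ < 1 := by
  rw [← dist_eq_norm] at hx hy ⊢
  exact (dist_triangle_max x 1 y).trans_lt (max_lt hx (by rwa [dist_comm]))

theorem norm_mul_sub_one_lt_one (hx : ‖x - 1‖ < 1) (hy : ‖y - 1‖ < 1) : ‖x * y - 1‖ < 1 := by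
  have hxy : x * y - 1 = x * (y - 1) + (x - 1) := by ring
  rw [hxy]
  refine (norm_add_le_max _ _).trans_lt (max_lt ?_ hx)
  rwa [norm_mul, norm_eq_one_of_norm_sub_one_lt_one hx, one_mul]

end IsUltrametricDist

theorem Padic.norm_four_eq_one {p : ℕ} [Fact p.Prime] (hp : p ≠ 2) : ‖(4 : ℚ_[p])‖ = 1 := by
  have hp2 : p.Coprime 2 := (Nat.coprime_primes Fact.out Nat.prime_two).mpr hp
  exact_mod_cast Padic.norm_natCast_eq_one_iff.mpr (by simpa using hp2.pow_right 2)

open IsUltrametricDist in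
theorem stmt16_general (p : ℕ) [Fact p.Prime] (hp : 3 ≤ p) (a b : ℚ_[p])
    (ha : ‖a - 1‖ < 1) (hb : ‖b - 1‖ < 1) (x₀ x₁ x₂ : ℚ_[p])
    (hx0 : ‖x₀ - 1‖ < 1)
    (hfix0 : a * (b ^ 2 * x₀ ^ 2 + 1) / (b ^ 2 + x₀ ^ 2) = x₀)
    (hfix1 : a * (b ^ 2 * x₁ ^ 2 + 1) / (b ^ 2 + x₁ ^ 2) = x₁)
    (hfix2 : a * (b ^ 2 * x₂ ^ 2 + 1) / (b ^ 2 + x₂ ^ 2) = x₂)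
    (h1 : ¬ ‖x₁ - 1‖ < 1) (h2 : ¬ ‖x₂ - 1‖ < 1) (hne : x₁ ≠ x₂) :
    ‖x₁ - x₂‖ = 1 ∧ Disjoint (Metric.ball x₁ ‖b - 1‖) (Metric.ball x₂ ‖b - 1‖) := by
  have hb0 : b ≠ 0 :=
    norm_ne_zero_iff.mp (by rw [norm_eq_one_of_norm_sub_one_lt_one hb]; exact one_ne_zero)
  have key : x₀ * (x₁ - x₂) ^ 2 = x₀ * (a * b ^ 2 - x₀) ^ 2 - 4 * a :=
    mul_sub_sq_of_three_roots (cubic_eq_zero_of_fixedPoint hb0 hfix0)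
      (cubic_eq_zero_of_fixedPoint hb0 hfix1) (cubic_eq_zero_of_fixedPoint hb0 hfix2)
      (fun h => h1 (h ▸ hx0)) (fun h => h2 (h ▸ hx0)) hne
  have hsmall : ‖a * b ^ 2 - x₀‖ < 1 :=
    norm_sub_lt_one_of_norm_sub_one_lt_one
      (norm_mul_sub_one_lt_one ha (by rw [sq]; exact norm_mul_sub_one_lt_one hb hb)) hx0
  have h4a : ‖4 * a‖ = 1 := by
    rw [norm_mul, Padic.norm_four_eq_one (by omega), norm_eq_one_of_norm_sub_one_lt_one ha, one_mul]
  have hdist : ‖x₁ - x₂‖ = 1 := by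
    have hΔ : ‖x₀ * (a * b ^ 2 - x₀) ^ 2 - 4 * a‖ = 1 := by
      refine (norm_sub_eq_of_norm_lt ?_).trans h4a
      rw [h4a, norm_mul, norm_pow, norm_eq_one_of_norm_sub_one_lt_one hx0, one_mul]
      exact pow_lt_one₀ (norm_nonneg _) hsmall two_ne_zero
    rw [← key, norm_mul, norm_pow, norm_eq_one_of_norm_sub_one_lt_one hx0, one_mul] at hΔ
    exact (pow_eq_one_iff_of_nonneg (norm_nonneg _) two_ne_zero).mp hΔ
  exact ⟨hdist, disjoint_ball_ball_of_le_dist (by rw [dist_eq_norm, hdist]; exact hb.le)⟩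

theorem stmt16 (p : ℕ) [Fact p.Prime] (hp : 3 ≤ p) (a b : ℚ_[p])
    (ha : ‖a - 1‖ < 1) (hb : ‖b - 1‖ < 1) (hb1 : b ≠ 1)
    (hab : ‖a - 1‖ < ‖b - 1‖) (x₀ x₁ x₂ : ℚ_[p])
    (hx0 : ‖x₀ - 1‖ < 1)
    (hfix0 : a * (b ^ 2 * x₀ ^ 2 + 1) / (b ^ 2 + x₀ ^ 2) = x₀)
    (hd1 : b ^ 2 + x₁ ^ 2 ≠ 0) (hd2 : b ^ 2 + x₂ ^ 2 ≠ 0)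
    (hfix1 : a * (b ^ 2 * x₁ ^ 2 + 1) / (b ^ 2 + x₁ ^ 2) = x₁)
    (hfix2 : a * (b ^ 2 * x₂ ^ 2 + 1) / (b ^ 2 + x₂ ^ 2) = x₂)
    (h1 : ¬ ‖x₁ - 1‖ < 1) (h2 : ¬ ‖x₂ - 1‖ < 1) (hne : x₁ ≠ x₂) :
    ‖x₁ - x₂‖ = 1 ∧ Disjoint (Metric.ball x₁ ‖b - 1‖) (Metric.ball x₂ ‖b - 1‖) :=
  stmt16_general p hp a b ha hb x₀ x₁ x₂ hx0 hfix0 hfix1 hfix2 h1 h2 hne
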